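/- arXiv:1106.5439 — 2 statements merged into one kernel-verified Lean document; each statement's English description precedes it below -/
import Mathlib

section
/- Let N ≥ 1 and let α, β ∈ P^+_N satisfy α(z)α̃(z) + β(z)β̃(z) = 1 on ℂ\{0} and |α(0)| + |β(0)| > 0. Then there exists a unique φ ∈ P^-_N such that all entries of [[1,0],[φ,1]]·[[α,β],[-β̃,α̃]] contain only nonnegative powers of z. -/
open Complex Finset Matrix

/-- Evaluation of the polynomial `∑_{k=0}^N a_k z^k` (element of `P⁺_N`). -/
noncomputable def pEval {N : ℕ} (a : Fin (N + 1) → ℂ) (z : ℂ) : ℂ :=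
  ∑ k : Fin (N + 1), a k * z ^ (k : ℕ)

/-- Evaluation of `p̃(z) = ∑_{k=0}^N conj(a_k) z^{-k}`. -/
noncomputable def pTilde {N : ℕ} (a : Fin (N + 1) → ℂ) (z : ℂ) : ℂ :=
  ∑ k : Fin (N + 1), (starRingEnd ℂ) (a k) * z⁻¹ ^ (k : ℕ)

/-- Evaluation of `φ(z) = ∑_{k=1}^N γ_k z^{-k}` (element of `P⁻_N`). -/
noncomputable def nEval {N : ℕ} (g : Fin N → ℂ) (z : ℂ) : ℂ :=
  ∑ k : Fin N, g k * z⁻¹ ^ ((k : ℕ) + 1)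

/-- A function on `ℂ \ {0}` that coincides with a polynomial in nonnegative powers of `z`. -/
def IsPolyFun (f : ℂ → ℂ) : Prop :=
  ∃ p : Polynomial ℂ, ∀ z : ℂ, z ≠ 0 → f z = p.eval z
/-!
Clearing denominators by `z ^ N` turns the problem into congruences modulo `X ^ N`. Writing
`A = X ^ N α̃`, `B = X ^ N β̃` and `G = X ^ N φ` (a polynomial of degree `< N`), the entries of
the second row of the product are `X ^ (-N)` times `G α - B` and `G β + A`. Since
`α A + β B = X ^ N`, one congruence implies the other as soon as `α(0) ≠ 0` (resp. `β(0) ≠ 0`),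
and then `α` (resp. `β`) is a unit modulo `X ^ N`, so that congruence has exactly one solution
of degree `< N`.
-/

open Polynomial

theorem Polynomial.eq_of_eval_eq_of_ne_zero {R : Type*} [CommRing R] [IsDomain R] [Infinite R]
    {p q : R[X]} (h : ∀ z : R, z ≠ 0 → p.eval z = q.eval z) : p = q :=
  eq_of_infinite_eval_eq p q ((Set.finite_singleton 0).infinite_compl.mono fun z hz => h z hz)

theorem Polynomial.isCoprime_X_pow_of_eval_zero_ne_zero {K : Type*} [Field K] {p : K[X]}
    (hp : p.eval 0 ≠ 0) (n : ℕ) : IsCoprime (X ^ n) p :=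
  (irreducible_X.coprime_iff_not_dvd.2 (by rwa [X_dvd_iff, coeff_zero_eq_eval_zero])).pow_left

section Congruence

variable {R : Type*} [CommRing R] [Nontrivial R] {m P : R[X]}

theorem eq_of_mem_degreeLT_of_dvd_sub (hm : m.Monic) {G G' : R[X]}
    (hG : G ∈ degreeLT R m.natDegree) (hG' : G' ∈ degreeLT R m.natDegree) (h : m ∣ G - G') :
    G = G' := by
  have hdeg : (G - G').degree < m.degree := by
    rw [degree_eq_natDegree hm.ne_zero]
    exact mem_degreeLT.1 (sub_mem hG hG')
  rw [← modByMonic_eq_self_iff hm, (modByMonic_eq_zero_iff_dvd hm).2 h] at hdeg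
  exact sub_eq_zero.1 hdeg.symm

theorem existsUnique_degreeLT_dvd_mul_sub (hm : m.Monic) (hcop : IsCoprime m P) (B : R[X]) :
    ∃! G : degreeLT R m.natDegree, m ∣ G * P - B := by
  obtain ⟨u, v, huv⟩ := id hcop
  have hG₀ : m ∣ v * B %ₘ m * P - B := by
    have hdiv := modByMonic_add_div (v * B) m
    exact ⟨-(B * u) - (v * B /ₘ m) * P, by linear_combination B * huv + P * hdiv⟩
  have hG₀_mem : v * B %ₘ m ∈ degreeLT R m.natDegree := by
    rw [mem_degreeLT, ← degree_eq_natDegree hm.ne_zero]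
    exact degree_modByMonic_lt _ hm
  refine ⟨⟨_, hG₀_mem⟩, hG₀, fun ⟨G, hG⟩ hGB => Subtype.ext ?_⟩
  refine eq_of_mem_degreeLT_of_dvd_sub hm hG hG₀_mem (hcop.dvd_of_dvd_mul_right ?_)
  simpa only [sub_mul, sub_sub_sub_cancel_right] using dvd_sub hGB hG₀

theorem existsUnique_degreeLT_dvd_and_dvd (hm : m.Monic) {Q A B : R[X]}
    (hPQ : P * A + Q * B = m) (hcop : IsCoprime m P ∨ IsCoprime m Q) :
    ∃! G : degreeLT R m.natDegree, m ∣ G * P - B ∧ m ∣ G * Q + A := by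
  have key : ∀ G : R[X], P * (G * Q + A) = Q * (G * P - B) + m := by
    intro G; rw [← hPQ]; ring
  rcases hcop with hP | hQ
  · refine (existsUnique_congr fun G => and_iff_left_of_imp fun h => ?_).2
      (existsUnique_degreeLT_dvd_mul_sub hm hP B)
    exact hP.dvd_of_dvd_mul_left (key G ▸ dvd_add (h.mul_left Q) dvd_rfl)
  · refine (existsUnique_congr fun G => ?_).2 (existsUnique_degreeLT_dvd_mul_sub hm hQ (-A))
    rw [sub_neg_eq_add, and_iff_right_of_imp fun h => hQ.dvd_of_dvd_mul_left ?_]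
    simpa only [key G, add_sub_cancel_right] using dvd_sub (h.mul_left P) (dvd_refl m)

end Congruence

noncomputable def pPoly {N : ℕ} (a : Fin (N + 1) → ℂ) : ℂ[X] :=
  ∑ k : Fin (N + 1), C (a k) * X ^ (k : ℕ)

/-- `X ^ N · ã`, a polynomial since `ã` only has powers `z ^ (-k)` with `k ≤ N`. -/
noncomputable def pTildePoly {N : ℕ} (a : Fin (N + 1) → ℂ) : ℂ[X] :=
  ∑ k : Fin (N + 1), C ((starRingEnd ℂ) (a k)) * X ^ (N - (k : ℕ))

/-- `φ ↦ X ^ N · φ`: the coefficient of `z ^ (-(k + 1))` becomes that of `X ^ (N - 1 - k)`. -/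
noncomputable def nPolyEquiv (N : ℕ) : (Fin N → ℂ) ≃ degreeLT ℂ N :=
  (Equiv.arrowCongr Fin.revPerm (.refl ℂ)).trans (degreeLTEquiv ℂ N).symm.toEquiv

theorem eval_pPoly {N : ℕ} (a : Fin (N + 1) → ℂ) (z : ℂ) : (pPoly a).eval z = pEval a z := by
  simp [pPoly, pEval, eval_finsetSum]

theorem eval_pTildePoly {N : ℕ} (a : Fin (N + 1) → ℂ) {z : ℂ} (hz : z ≠ 0) :
    (pTildePoly a).eval z = z ^ N * pTilde a z := by
  simp only [pTildePoly, pTilde, eval_finsetSum, Finset.mul_sum, eval_mul, eval_C, eval_pow,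
    eval_X, pow_sub₀ z hz (Fin.is_le _), inv_pow]
  exact Finset.sum_congr rfl fun k _ => by ring

theorem degreeLTEquiv_nPolyEquiv {N : ℕ} (g : Fin N → ℂ) :
    degreeLTEquiv ℂ N (nPolyEquiv N g) = fun k => g k.rev := by
  funext k
  simp [nPolyEquiv]

theorem eval_nPolyEquiv {N : ℕ} (g : Fin N → ℂ) {z : ℂ} (hz : z ≠ 0) :
    (nPolyEquiv N g : ℂ[X]).eval z = z ^ N * nEval g z := by
  rw [eval_eq_sum_degreeLTEquiv (Submodule.coe_mem _), Subtype.coe_eta, degreeLTEquiv_nPolyEquiv,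
    nEval, Finset.mul_sum, ← Equiv.sum_comp Fin.revPerm]
  refine Finset.sum_congr rfl fun k _ => ?_
  simp only [Fin.revPerm_apply, Fin.rev_rev, Fin.val_rev, Nat.succ_eq_add_one, pow_sub₀ z hz k.isLt]
  ring

theorem isPolyFun_iff_X_pow_dvd {f : ℂ → ℂ} {q : ℂ[X]} (N : ℕ)
    (h : ∀ z : ℂ, z ≠ 0 → z ^ N * f z = q.eval z) : IsPolyFun f ↔ X ^ N ∣ q := by
  constructor
  · rintro ⟨p, hp⟩
    exact ⟨p, eq_of_eval_eq_of_ne_zero fun z hz => by simp [← h z hz, hp z hz]⟩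
  · rintro ⟨p, rfl⟩
    exact ⟨p, fun z hz => mul_left_cancel₀ (pow_ne_zero N hz) (by simpa using h z hz)⟩

theorem isPolyFun_pEval {N : ℕ} (a : Fin (N + 1) → ℂ) : IsPolyFun (pEval a) :=
  ⟨pPoly a, fun z _ => (eval_pPoly a z).symm⟩

theorem entries_isPolyFun_iff {N : ℕ} (a b : Fin (N + 1) → ℂ) (g : Fin N → ℂ) :
    (∀ i j : Fin 2, IsPolyFun (fun z =>
      ((!![(1 : ℂ), 0; nEval g z, 1] : Matrix (Fin 2) (Fin 2) ℂ) *
        !![pEval a z, pEval b z; -pTilde b z, pTilde a z]) i j)) ↔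
    X ^ N ∣ (nPolyEquiv N g : ℂ[X]) * pPoly a - pTildePoly b ∧
      X ^ N ∣ (nPolyEquiv N g : ℂ[X]) * pPoly b + pTildePoly a := by
  have row₁₀ : ∀ z : ℂ, z ≠ 0 → z ^ N * (nEval g z * pEval a z + -pTilde b z) =
      ((nPolyEquiv N g : ℂ[X]) * pPoly a - pTildePoly b).eval z := by
    intro z hz
    rw [eval_sub, eval_mul, eval_nPolyEquiv g hz, eval_pPoly, eval_pTildePoly b hz]
    ring
  have row₁₁ : ∀ z : ℂ, z ≠ 0 → z ^ N * (nEval g z * pEval b z + pTilde a z) =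
      ((nPolyEquiv N g : ℂ[X]) * pPoly b + pTildePoly a).eval z := by
    intro z hz
    rw [eval_add, eval_mul, eval_nPolyEquiv g hz, eval_pPoly, eval_pTildePoly a hz]
    ring
  simp only [Fin.forall_fin_two, mul_fin_two, of_apply, cons_val', cons_val_zero, cons_val_one,
    empty_val', cons_val_fin_one, one_mul, zero_mul, add_zero, isPolyFun_iff_X_pow_dvd N row₁₀,
    isPolyFun_iff_X_pow_dvd N row₁₁]
  exact and_iff_right ⟨isPolyFun_pEval a, isPolyFun_pEval b⟩

theorem pPoly_mul_pTildePoly_add_pPoly_mul_pTildePoly {N : ℕ} {a b : Fin (N + 1) → ℂ}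
    (hunit : ∀ z : ℂ, z ≠ 0 → pEval a z * pTilde a z + pEval b z * pTilde b z = 1) :
    pPoly a * pTildePoly a + pPoly b * pTildePoly b = X ^ N := by
  refine eq_of_eval_eq_of_ne_zero fun z hz => ?_
  rw [eval_add, eval_mul, eval_mul, eval_pow, eval_X, eval_pPoly, eval_pPoly,
    eval_pTildePoly a hz, eval_pTildePoly b hz]
  linear_combination z ^ N * hunit z hz

theorem daubechies_theorem2_general (N : ℕ) (a b : Fin (N + 1) → ℂ)
    (hunit : ∀ z : ℂ, z ≠ 0 →
      pEval a z * pTilde a z + pEval b z * pTilde b z = 1)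
    (h0 : 0 < ‖pEval a 0‖ + ‖pEval b 0‖) :
    ∃! g : Fin N → ℂ, ∀ i j : Fin 2, IsPolyFun (fun z =>
      ((!![(1 : ℂ), 0; nEval g z, 1] : Matrix (Fin 2) (Fin 2) ℂ) *
        !![pEval a z, pEval b z; -pTilde b z, pTilde a z]) i j) := by
  have h0' : pEval a 0 ≠ 0 ∨ pEval b 0 ≠ 0 := by
    by_contra! h
    simp [h.1, h.2] at h0
  have hcop : IsCoprime (X ^ N) (pPoly a) ∨ IsCoprime (X ^ N) (pPoly b) := by
    simp only [← eval_pPoly] at h0'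
    exact h0'.imp (isCoprime_X_pow_of_eval_zero_ne_zero · N)
      (isCoprime_X_pow_of_eval_zero_ne_zero · N)
  have h := existsUnique_degreeLT_dvd_and_dvd (monic_X_pow N)
    (pPoly_mul_pTildePoly_add_pPoly_mul_pTildePoly hunit) hcop
  rw [natDegree_X_pow] at h
  exact ((nPolyEquiv N).existsUnique_congr (entries_isPolyFun_iff a b)).2 h

/-- Theorem 2: for any `α, β ∈ P⁺_N` with `α α̃ + β β̃ = 1` on `ℂ \ {0}` and
`|α(0)| + |β(0)| > 0`, there exists a unique `φ ∈ P⁻_N` such that all entries of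
`[[1,0],[φ,1]]·[[α,β],[-β̃,α̃]]` contain only nonnegative powers of `z`. -/
theorem daubechies_theorem2 (N : ℕ) (hN : 1 ≤ N) (a b : Fin (N + 1) → ℂ)
    (hunit : ∀ z : ℂ, z ≠ 0 →
      pEval a z * pTilde a z + pEval b z * pTilde b z = 1)
    (h0 : 0 < ‖pEval a 0‖ + ‖pEval b 0‖) :
    ∃! g : Fin N → ℂ, ∀ i j : Fin 2, IsPolyFun (fun z =>
      ((!![(1 : ℂ), 0; nEval g z, 1] : Matrix (Fin 2) (Fin 2) ℂ) *
        !![pEval a z, pEval b z; -pTilde b z, pTilde a z]) i j) :=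
  daubechies_theorem2_general N a b hunit h0
end

section
/- Let α, β ∈ P^+_N satisfy αα̃ + ββ̃ = 1 on ℂ\{0}, |α(0)| + |β(0)| > 0, α(1) = 1 and β(1) = 0. Let φ = Π(α,β) be the unique element of P^-_N from Theorem 2 and (α',β') = ∐(φ) the unique normalized pair from Theorem 1. Then (α',β') = (α,β); i.e., ∐ ∘ Π is the identity on the set of normalized pairs. -/
/-!
Write `U = [[α, β], [-β̃, α̃]]` and `L = [[1, 0], [φ, 1]]`. Since `det L = 1`,
`adj (L U) · (L U') = adj U · U'`, so `adj U · U'` has polynomial entries. It is again of the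
form `[[p, q], [-q̃, p̃]]`, so `p`, `q` and their paraconjugates are all polynomials; a Laurent
polynomial that is a polynomial both in `z` and in `z⁻¹` is constant. The normalisation at
`z = 1` makes `adj U · U'` the identity, and `det U = αα̃ + ββ̃ = 1` then gives `U' = U`.
-/

open Complex Finset Matrix

open ComplexConjugate Polynomial

theorem Polynomial.natDegree_eq_zero_of_eval_eq_eval_inv {K : Type*} [Field K] [Infinite K]
    {P Q : K[X]} (h : ∀ z ≠ 0, P.eval z = Q.eval z⁻¹) : Q.natDegree = 0 := by
  -- `z ^ n * P z = z ^ n * Q z⁻¹` is a polynomial whose constant term is the leading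
  -- coefficient of `Q`, where `n = Q.natDegree`.
  by_contra hn
  have key : X ^ Q.natDegree * P = reflect Q.natDegree Q := by
    refine eq_of_infinite_eval_eq _ _ ((Set.finite_singleton 0).infinite_compl.mono fun z hz => ?_)
    have hz : z ≠ 0 := hz
    let := invertibleOfNonzero (inv_ne_zero hz)
    have := eval₂_reflect_mul_pow (RingHom.id K) z⁻¹ Q.natDegree Q le_rfl
    rw [invOf_eq_inv, inv_inv, ← eval, ← eval] at this
    rw [Set.mem_ofPred_eq, eval_mul, eval_pow, eval_X, h z hz, ← this, inv_pow,
      mul_left_comm, mul_inv_cancel₀ (pow_ne_zero _ hz), mul_one]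
  have := congrArg (coeff · 0) key
  simp only [coeff_X_pow_mul', coeff_reflect, revAt_zero, Nat.le_zero, if_neg hn] at this
  exact leadingCoeff_ne_zero.mpr (by rintro rfl; simp at hn) this.symm

/-- The paper's `f̃`. -/
noncomputable def paraconj (f : ℂ → ℂ) (z : ℂ) : ℂ := conj (f (conj z)⁻¹)

@[simp]
lemma paraconj_paraconj (f : ℂ → ℂ) : paraconj (paraconj f) = f := by
  ext z
  simp [paraconj]

lemma paraconj_pEval {N : ℕ} (a : Fin (N + 1) → ℂ) : paraconj (pEval a) = pTilde a := by
  ext z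
  simp [paraconj, pEval, pTilde]

lemma IsPolyFun.neg {f : ℂ → ℂ} (hf : IsPolyFun f) : IsPolyFun fun z => -f z := by
  obtain ⟨P, hP⟩ := hf
  exact ⟨-P, fun z hz => by simp [hP z hz]⟩

lemma IsPolyFun.add {f g : ℂ → ℂ} (hf : IsPolyFun f) (hg : IsPolyFun g) :
    IsPolyFun fun z => f z + g z := by
  obtain ⟨P, hP⟩ := hf
  obtain ⟨Q, hQ⟩ := hg
  exact ⟨P + Q, fun z hz => by simp [hP z hz, hQ z hz]⟩

lemma IsPolyFun.mul {f g : ℂ → ℂ} (hf : IsPolyFun f) (hg : IsPolyFun g) :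
    IsPolyFun fun z => f z * g z := by
  obtain ⟨P, hP⟩ := hf
  obtain ⟨Q, hQ⟩ := hg
  exact ⟨P * Q, fun z hz => by simp [hP z hz, hQ z hz]⟩

theorem IsPolyFun.apply_eq_apply_one {f : ℂ → ℂ} (hf : IsPolyFun f)
    (hf' : IsPolyFun (paraconj f)) {z : ℂ} (hz : z ≠ 0) : f z = f 1 := by
  obtain ⟨P, hP⟩ := hf
  obtain ⟨Q, hQ⟩ := hf'
  have hPQ : ∀ w ≠ 0, P.eval w = (Q.map (starRingEnd ℂ)).eval w⁻¹ := by
    intro w hw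
    have := congrArg conj (hQ (conj w)⁻¹ (by simpa using hw))
    simp only [paraconj, map_inv₀, Complex.conj_conj, inv_inv] at this
    rw [← hP w hw, this, eval_map, ← eval₂_at_apply, map_inv₀, Complex.conj_conj]
  obtain ⟨c, hc⟩ := natDegree_eq_zero.mp (natDegree_eq_zero_of_eval_eq_eval_inv hPQ)
  rw [hP z hz, hP 1 one_ne_zero, hPQ z hz, hPQ 1 one_ne_zero, ← hc, eval_C, eval_C]

def IsPolyMatFun (M : ℂ → Matrix (Fin 2) (Fin 2) ℂ) : Prop :=
  ∀ i j, IsPolyFun fun z => M z i j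

lemma IsPolyMatFun.mul {M M' : ℂ → Matrix (Fin 2) (Fin 2) ℂ} (hM : IsPolyMatFun M)
    (hM' : IsPolyMatFun M') : IsPolyMatFun fun z => M z * M' z := by
  intro i j
  simp only [Matrix.mul_apply, Fin.sum_univ_two]
  exact ((hM i 0).mul (hM' 0 j)).add ((hM i 1).mul (hM' 1 j))

lemma IsPolyMatFun.adjugate {M : ℂ → Matrix (Fin 2) (Fin 2) ℂ} (hM : IsPolyMatFun M) :
    IsPolyMatFun fun z => (M z).adjugate := by
  intro i j
  fin_cases i <;> fin_cases j <;> simp [Matrix.adjugate_fin_two]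
  · exact hM 1 1
  · exact (hM 0 1).neg
  · exact (hM 1 0).neg
  · exact hM 0 0

theorem Matrix.adjugate_mul_mul_mul_of_det_eq_one {n R : Type*} [Fintype n] [DecidableEq n]
    [CommRing R] {A : Matrix n n R} (hA : A.det = 1) (B C : Matrix n n R) :
    (A * B).adjugate * (A * C) = B.adjugate * C := by
  rw [adjugate_mul_distrib, Matrix.mul_assoc, ← Matrix.mul_assoc A.adjugate, adjugate_mul, hA,
    one_smul, Matrix.one_mul]

noncomputable def paraMat (p q : ℂ → ℂ) (z : ℂ) : Matrix (Fin 2) (Fin 2) ℂ :=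
  !![p z, q z; -paraconj q z, paraconj p z]

lemma paraMat_pEval {N : ℕ} (a b : Fin (N + 1) → ℂ) (z : ℂ) :
    paraMat (pEval a) (pEval b) z = !![pEval a z, pEval b z; -pTilde b z, pTilde a z] := by
  rw [paraMat, paraconj_pEval, paraconj_pEval]

lemma adjugate_paraMat_mul_paraMat (p q p' q' : ℂ → ℂ) (z : ℂ) :
    (paraMat p q z).adjugate * paraMat p' q' z =
      paraMat (paraconj p * p' + q * paraconj q') (paraconj p * q' - q * paraconj p') z := by
  ext i j
  fin_cases i <;> fin_cases j <;>
    simp [paraMat, Matrix.adjugate_fin_two, paraconj] <;> ring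

lemma IsPolyMatFun.paraMat_eq {p q : ℂ → ℂ} (h : IsPolyMatFun (paraMat p q)) {z : ℂ}
    (hz : z ≠ 0) : paraMat p q z = paraMat p q 1 := by
  have hp : IsPolyFun p := h 0 0
  have hp' : IsPolyFun (paraconj p) := h 1 1
  have hq : IsPolyFun q := h 0 1
  have hq' : IsPolyFun (paraconj q) := by simpa [paraMat] using (h 1 0).neg
  rw [paraMat, paraMat, hp.apply_eq_apply_one hp' hz, hq.apply_eq_apply_one hq' hz,
    hp'.apply_eq_apply_one (by simpa using hp) hz, hq'.apply_eq_apply_one (by simpa using hq) hz]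

noncomputable def polyOf {N : ℕ} (a : Fin (N + 1) → ℂ) : ℂ[X] :=
  ∑ k : Fin (N + 1), C (a k) * X ^ (k : ℕ)

lemma eval_polyOf {N : ℕ} (a : Fin (N + 1) → ℂ) (z : ℂ) : (polyOf a).eval z = pEval a z := by
  simp [polyOf, pEval, eval_finsetSum]

lemma coeff_polyOf {N : ℕ} (a : Fin (N + 1) → ℂ) (k : Fin (N + 1)) :
    (polyOf a).coeff k = a k := by
  simp [polyOf, coeff_X_pow, Fin.val_inj]

lemma eq_of_pEval_eq {N : ℕ} {a b : Fin (N + 1) → ℂ} (h : ∀ z ≠ 0, pEval a z = pEval b z) :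
    a = b := by
  have : polyOf a = polyOf b :=
    eq_of_infinite_eval_eq _ _ ((Set.finite_singleton 0).infinite_compl.mono fun z hz => by
      simpa [eval_polyOf] using h z hz)
  ext k
  rw [← coeff_polyOf a, ← coeff_polyOf b, this]

theorem paraMat_eq_of_isPolyMatFun_adjugate_mul {p q p' q' : ℂ → ℂ}
    (h : IsPolyMatFun fun z => (paraMat p q z).adjugate * paraMat p' q' z)
    (hdet : ∀ z ≠ 0, (paraMat p q z).det = 1) (h1 : paraMat p q 1 = 1)
    (h1' : paraMat p' q' 1 = 1) : ∀ z ≠ 0, paraMat p' q' z = paraMat p q z := by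
  simp only [adjugate_paraMat_mul_paraMat] at h
  intro z hz
  calc paraMat p' q' z = paraMat p q z * ((paraMat p q z).adjugate * paraMat p' q' z) := by
        rw [← Matrix.mul_assoc, mul_adjugate, hdet z hz, one_smul, Matrix.one_mul]
    _ = paraMat p q z * ((paraMat p q 1).adjugate * paraMat p' q' 1) := by
        rw [adjugate_paraMat_mul_paraMat, adjugate_paraMat_mul_paraMat, h.paraMat_eq hz]
    _ = paraMat p q z := by rw [h1, h1', Matrix.adjugate_one, Matrix.mul_one, Matrix.mul_one]

lemma paraMat_pEval_one {N : ℕ} {a b : Fin (N + 1) → ℂ} (ha : pEval a 1 = 1) (hb : pEval b 1 = 0) :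
    paraMat (pEval a) (pEval b) 1 = 1 := by
  simp [paraMat, paraconj, ha, hb, Matrix.one_fin_two]

theorem daubechies_corollary4_general (N : ℕ)
    (a b : Fin (N + 1) → ℂ)
    (hunit : ∀ z : ℂ, z ≠ 0 →
      pEval a z * pTilde a z + pEval b z * pTilde b z = 1)
    (ha1 : pEval a 1 = 1) (hb1 : pEval b 1 = 0)
    (g : Fin N → ℂ)
    (hpoly : ∀ i j : Fin 2, IsPolyFun (fun z =>
      ((!![(1 : ℂ), 0; nEval g z, 1] : Matrix (Fin 2) (Fin 2) ℂ) *
        !![pEval a z, pEval b z; -pTilde b z, pTilde a z]) i j))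
    (a' b' : Fin (N + 1) → ℂ)
    (ha'1 : pEval a' 1 = 1) (hb'1 : pEval b' 1 = 0)
    (hpoly' : ∀ i j : Fin 2, IsPolyFun (fun z =>
      ((!![(1 : ℂ), 0; nEval g z, 1] : Matrix (Fin 2) (Fin 2) ℂ) *
        !![pEval a' z, pEval b' z; -pTilde b' z, pTilde a' z]) i j)) :
    a' = a ∧ b' = b := by
  have hL : ∀ z, (!![(1 : ℂ), 0; nEval g z, 1]).det = 1 := by simp [Matrix.det_fin_two_of]
  have hX : IsPolyMatFun fun z =>
      (paraMat (pEval a) (pEval b) z).adjugate * paraMat (pEval a') (pEval b') z := by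
    simpa only [paraMat_pEval, Matrix.adjugate_mul_mul_mul_of_det_eq_one, hL] using
      (IsPolyMatFun.adjugate hpoly).mul hpoly'
  have hU := paraMat_eq_of_isPolyMatFun_adjugate_mul hX
    (fun z hz => by simpa [paraMat_pEval, Matrix.det_fin_two_of] using hunit z hz)
    (paraMat_pEval_one ha1 hb1) (paraMat_pEval_one ha'1 hb'1)
  exact ⟨eq_of_pEval_eq fun z hz => congrFun₂ (hU z hz) 0 0,
    eq_of_pEval_eq fun z hz => congrFun₂ (hU z hz) 0 1⟩

/-- Corollary 4: `∐ ∘ Π` is the identity on normalized pairs: if `(α,β)` is normalized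
(`α(1)=1`, `β(1)=0`), `φ = Π(α,β)`, and `(α',β') = ∐(φ)` is the normalized pair for `φ`,
then `(α',β') = (α,β)`. -/
theorem daubechies_corollary4 (N : ℕ) (hN : 1 ≤ N)
    (a b : Fin (N + 1) → ℂ)
    (hunit : ∀ z : ℂ, z ≠ 0 →
      pEval a z * pTilde a z + pEval b z * pTilde b z = 1)
    (h0 : 0 < ‖pEval a 0‖ + ‖pEval b 0‖)
    (ha1 : pEval a 1 = 1) (hb1 : pEval b 1 = 0)
    (g : Fin N → ℂ)
    (hpoly : ∀ i j : Fin 2, IsPolyFun (fun z =>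
      ((!![(1 : ℂ), 0; nEval g z, 1] : Matrix (Fin 2) (Fin 2) ℂ) *
        !![pEval a z, pEval b z; -pTilde b z, pTilde a z]) i j))
    (a' b' : Fin (N + 1) → ℂ)
    (hunit' : ∀ z : ℂ, z ≠ 0 →
      pEval a' z * pTilde a' z + pEval b' z * pTilde b' z = 1)
    (ha'1 : pEval a' 1 = 1) (hb'1 : pEval b' 1 = 0)
    (hpoly' : ∀ i j : Fin 2, IsPolyFun (fun z =>
      ((!![(1 : ℂ), 0; nEval g z, 1] : Matrix (Fin 2) (Fin 2) ℂ) *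
        !![pEval a' z, pEval b' z; -pTilde b' z, pTilde a' z]) i j)) :
    a' = a ∧ b' = b :=
  daubechies_corollary4_general N a b hunit ha1 hb1 g hpoly a' b' ha'1 hb'1 hpoly'
end
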